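/- Let V be a nonempty finite set of nodes with embeddings φ : V → ℝ satisfying |φ(v)| ≤ β for all v ∈ V. Let w ∈ ℝ be a weight with |w| ≤ θ + t·η·α_x·α_f·β for given constants θ, η, α_f ≥ 0 and iteration count t ∈ ℕ. Let f : ℝ × ℝ × ℝ → ℝ satisfy |f(x₁, y₁, z) − f(x₂, y₂, z)| ≤ M·|z|·√((x₁ − x₂)² + (y₁ − y₂)²) for a constant M ≥ 0. Let S and T be nonempty finite sets of ordered node pairs (the training and test edge sets), with true sign labels a : S → {−1, 0, 1} and b : T → {−1, 0, 1}, and with predictions given by f applied to the endpoint embeddings and w, i.e. â(i, j) = f(φ(i), φ(j), w) and b̂(p, q) = f(φ(p), φ(q), w). Let the loss L : ℝ × ℝ → ℝ be α_y-Lipschitz in its first argument uniformly in the second and α_x-Lipschitz in its second argument uniformly in the first. Then the generalization gap satisfies |(1/|S|) · Σ_{(i,j) ∈ S} L(â(i,j), a(i,j)) − (1/|T|) · Σ_{(p,q) ∈ T} L(b̂(p,q), b(p,q))| ≤ 2·α_x + 2·√2·α_y·M·β·(θ + t·η·α_x·α_f·β). -/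
import Mathlib


/-- Theorem 1 of the paper (Generalization Gap of SGNN), in the finite setting of
the simplified SGNN framework for link sign prediction. -/
theorem sgnn_generalization_gap {ι : Type*} (V : Finset ι) (hV : V.Nonempty)
    (φ : ι → ℝ) (β : ℝ) (hφ : ∀ v ∈ V, |φ v| ≤ β)
    (θ η αf αx αy M : ℝ) (hθ : 0 ≤ θ) (hη : 0 ≤ η) (hαf : 0 ≤ αf) (hM : 0 ≤ M)
    (t : ℕ) (w : ℝ) (hw : |w| ≤ θ + (t : ℝ) * η * αx * αf * β)
    (f : ℝ → ℝ → ℝ → ℝ)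
    (hf : ∀ x₁ y₁ x₂ y₂ z : ℝ,
      |f x₁ y₁ z - f x₂ y₂ z| ≤ M * |z| * Real.sqrt ((x₁ - x₂) ^ 2 + (y₁ - y₂) ^ 2))
    (S T : Finset (ι × ι)) (hS : S.Nonempty) (hT : T.Nonempty)
    (hSV : S ⊆ V ×ˢ V) (hTV : T ⊆ V ×ˢ V)
    (a : ι × ι → ℝ) (b : ι × ι → ℝ)
    (ha : ∀ e ∈ S, a e ∈ ({-1, 0, 1} : Set ℝ))
    (hb : ∀ e ∈ T, b e ∈ ({-1, 0, 1} : Set ℝ))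
    (L : ℝ → ℝ → ℝ)
    (hLy : ∀ x x' y : ℝ, |L x y - L x' y| ≤ αy * |x - x'|)
    (hLx : ∀ x y y' : ℝ, |L x y - L x y'| ≤ αx * |y - y'|) :
    |(1 / (S.card : ℝ)) * ∑ e ∈ S, L (f (φ e.1) (φ e.2) w) (a e) -
      (1 / (T.card : ℝ)) * ∑ e ∈ T, L (f (φ e.1) (φ e.2) w) (b e)| ≤
      2 * αx + 2 * Real.sqrt 2 * αy * M * β * (θ + (t : ℝ) * η * αx * αf * β) := by
  -- basic nonnegativity facts
  obtain ⟨v0, hv0⟩ := hV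
  have hβ : 0 ≤ β := le_trans (abs_nonneg _) (hφ v0 hv0)
  have hαy : 0 ≤ αy := by
    have h := hLy 0 1 0
    have h0 : (0:ℝ) ≤ |L 0 0 - L 1 0| := abs_nonneg _
    simpa using le_trans h0 h
  have hαx : 0 ≤ αx := by
    have h := hLx 0 0 1
    have h0 : (0:ℝ) ≤ |L 0 0 - L 0 1| := abs_nonneg _
    simpa using le_trans h0 h
  have hWnn : 0 ≤ θ + (t : ℝ) * η * αx * αf * β := le_trans (abs_nonneg w) hw
  have hsqrt2 : 0 ≤ Real.sqrt 2 := Real.sqrt_nonneg 2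
  set g : ι × ι → ℝ := fun e => L (f (φ e.1) (φ e.2) w) (a e) with hg
  set h : ι × ι → ℝ := fun e => L (f (φ e.1) (φ e.2) w) (b e) with hh
  set C : ℝ := 2 * αx + 2 * Real.sqrt 2 * αy * M * β * (θ + (t : ℝ) * η * αx * αf * β)
    with hCdef
  have hSc : (0:ℝ) < (S.card : ℝ) := by exact_mod_cast Finset.card_pos.mpr hS
  have hTc : (0:ℝ) < (T.card : ℝ) := by exact_mod_cast Finset.card_pos.mpr hT
  -- pairwise bound
  have key : ∀ e ∈ S, ∀ e' ∈ T, |g e - h e'| ≤ C := by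
    intro e he e' he'
    have heV := Finset.mem_product.mp (hSV he)
    have he'V := Finset.mem_product.mp (hTV he')
    have h1 := hφ e.1 heV.1
    have h2 := hφ e.2 heV.2
    have h3 := hφ e'.1 he'V.1
    have h4 := hφ e'.2 he'V.2
    -- bound on |f e - f e'|
    have hfd : |f (φ e.1) (φ e.2) w - f (φ e'.1) (φ e'.2) w|
        ≤ M * |w| * (2 * Real.sqrt 2 * β) := by
      have hb1 : (φ e.1 - φ e'.1) ^ 2 ≤ (2 * β) ^ 2 := by
        have := abs_le.mp h1; have := abs_le.mp h3
        nlinarith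
      have hb2 : (φ e.2 - φ e'.2) ^ 2 ≤ (2 * β) ^ 2 := by
        have := abs_le.mp h2; have := abs_le.mp h4
        nlinarith
      have hsum : (φ e.1 - φ e'.1) ^ 2 + (φ e.2 - φ e'.2) ^ 2 ≤ 8 * β ^ 2 := by
        nlinarith
      have hsq : Real.sqrt ((φ e.1 - φ e'.1) ^ 2 + (φ e.2 - φ e'.2) ^ 2)
          ≤ 2 * Real.sqrt 2 * β := by
        have h8 : Real.sqrt (8 * β ^ 2) = 2 * Real.sqrt 2 * β := by
          rw [show (8:ℝ) * β ^ 2 = (2 * β) ^ 2 * 2 by ring,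
            Real.sqrt_mul (sq_nonneg _), Real.sqrt_sq (by positivity)]
          ring
        calc Real.sqrt ((φ e.1 - φ e'.1) ^ 2 + (φ e.2 - φ e'.2) ^ 2)
            ≤ Real.sqrt (8 * β ^ 2) := Real.sqrt_le_sqrt hsum
          _ = 2 * Real.sqrt 2 * β := h8
      calc |f (φ e.1) (φ e.2) w - f (φ e'.1) (φ e'.2) w|
          ≤ M * |w| * Real.sqrt ((φ e.1 - φ e'.1) ^ 2 + (φ e.2 - φ e'.2) ^ 2) :=
            hf _ _ _ _ _
        _ ≤ M * |w| * (2 * Real.sqrt 2 * β) := by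
            apply mul_le_mul_of_nonneg_left hsq (by positivity)
    -- label bound
    have hab : |a e - b e'| ≤ 2 := by
      have ha' : |a e| ≤ 1 := by
        rcases ha e he with h | h | h <;> rw [h] <;> norm_num
      have hb' : |b e'| ≤ 1 := by
        rcases hb e' he' with h | h | h <;> rw [h] <;> norm_num
      calc |a e - b e'| ≤ |a e| + |b e'| := abs_sub _ _
        _ ≤ 2 := by linarith
    -- assemble
    have step : |g e - h e'| ≤
        αy * (M * |w| * (2 * Real.sqrt 2 * β)) + αx * 2 := by
      have htri : |g e - h e'| ≤
          |L (f (φ e.1) (φ e.2) w) (a e) - L (f (φ e'.1) (φ e'.2) w) (a e)| +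
          |L (f (φ e'.1) (φ e'.2) w) (a e) - L (f (φ e'.1) (φ e'.2) w) (b e')| := by
        simpa [hg, hh] using
          abs_sub_le (L (f (φ e.1) (φ e.2) w) (a e))
            (L (f (φ e'.1) (φ e'.2) w) (a e)) (L (f (φ e'.1) (φ e'.2) w) (b e'))
      have hA := hLy (f (φ e.1) (φ e.2) w) (f (φ e'.1) (φ e'.2) w) (a e)
      have hB := hLx (f (φ e'.1) (φ e'.2) w) (a e) (b e')
      have hA' : |L (f (φ e.1) (φ e.2) w) (a e) - L (f (φ e'.1) (φ e'.2) w) (a e)|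
          ≤ αy * (M * |w| * (2 * Real.sqrt 2 * β)) :=
        le_trans hA (mul_le_mul_of_nonneg_left hfd hαy)
      have hB' : |L (f (φ e'.1) (φ e'.2) w) (a e) - L (f (φ e'.1) (φ e'.2) w) (b e')|
          ≤ αx * 2 :=
        le_trans hB (mul_le_mul_of_nonneg_left hab hαx)
      linarith
    have hfin : αy * (M * |w| * (2 * Real.sqrt 2 * β)) + αx * 2 ≤ C := by
      rw [hCdef]
      have hmul : αy * (M * |w| * (2 * Real.sqrt 2 * β)) ≤
          αy * (M * (θ + (t : ℝ) * η * αx * αf * β) * (2 * Real.sqrt 2 * β)) := by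
        have : M * |w| * (2 * Real.sqrt 2 * β)
            ≤ M * (θ + (t : ℝ) * η * αx * αf * β) * (2 * Real.sqrt 2 * β) := by
          apply mul_le_mul_of_nonneg_right _ (by positivity)
          exact mul_le_mul_of_nonneg_left hw hM
        exact mul_le_mul_of_nonneg_left this hαy
      nlinarith [hmul]
    linarith
  have hC0 : 0 ≤ C := by
    obtain ⟨e, he⟩ := hS
    obtain ⟨e', he'⟩ := hT
    exact le_trans (abs_nonneg _) (key e he e' he')
  -- double sum identity
  have hid : (1 / (S.card : ℝ)) * ∑ e ∈ S, g e - (1 / (T.card : ℝ)) * ∑ e ∈ T, h e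
      = (∑ e ∈ S, ∑ e' ∈ T, (g e - h e')) / ((S.card : ℝ) * (T.card : ℝ)) := by
    have : ∑ e ∈ S, ∑ e' ∈ T, (g e - h e')
        = (T.card : ℝ) * ∑ e ∈ S, g e - (S.card : ℝ) * ∑ e' ∈ T, h e' := by
      simp [Finset.sum_sub_distrib, Finset.sum_const, nsmul_eq_mul, Finset.mul_sum]
      try ring
    rw [this]
    field_simp
    try ring
  rw [show |(1 / (S.card : ℝ)) * ∑ e ∈ S, L (f (φ e.1) (φ e.2) w) (a e) -
      (1 / (T.card : ℝ)) * ∑ e ∈ T, L (f (φ e.1) (φ e.2) w) (b e)|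
      = |(1 / (S.card : ℝ)) * ∑ e ∈ S, g e - (1 / (T.card : ℝ)) * ∑ e ∈ T, h e| by rfl]
  rw [hid, abs_div, abs_of_pos (mul_pos hSc hTc), div_le_iff₀ (mul_pos hSc hTc)]
  calc |∑ e ∈ S, ∑ e' ∈ T, (g e - h e')|
      ≤ ∑ e ∈ S, |∑ e' ∈ T, (g e - h e')| := Finset.abs_sum_le_sum_abs _ _
    _ ≤ ∑ e ∈ S, ∑ e' ∈ T, |g e - h e'| := by
        apply Finset.sum_le_sum
        intro e he
        exact Finset.abs_sum_le_sum_abs _ _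
    _ ≤ ∑ e ∈ S, ∑ e' ∈ T, C := by
        apply Finset.sum_le_sum; intro e he
        apply Finset.sum_le_sum; intro e' he'
        exact key e he e' he'
    _ = (S.card : ℝ) * (T.card : ℝ) * C := by
        simp [Finset.sum_const, nsmul_eq_mul]; ring
    _ = C * ((S.card : ℝ) * (T.card : ℝ)) := by ring
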